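/- Let B be a generalized Bayesian network with cutset C, let γ be a distribution over assignments of C, and let M = (Asg(C), P) be the cutset Markov chain of B with respect to C. Then the following four statements are equivalent: (a) γ = γ·P; (b) there exists a distribution γ0 over assignments of C such that, with γ_{i+1} = γ_i·P, γ is the Cesàro limit lim_{n→∞} (1/(n+1)) Σ_{i=0}^{n} γ_i; (c) γ belongs to the convex hull of the long-run frequency distributions lrf_D of the bottom SCCs D of M (each padded with zero entries outside D); (d) γ = Next(B, C, γ)|_C. -/

import Mathlib

open Filter
open scoped Classical

noncomputable section

namespace GBNPaper

variable {V : Type} [Fintype V] [DecidableEq V]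

/-- A distribution over a finite type: nonnegative values summing to one. -/
def IsDist {α : Type} [Fintype α] (μ : α → ℝ) : Prop :=
  (∀ a, 0 ≤ μ a) ∧ ∑ a, μ a = 1

/-- The set of parents of a node `X` w.r.t. an edge set `E`. -/
def Pre (E : Finset (V × V)) (X : V) : Finset V :=
  (E.filter fun e => e.2 = X).image Prod.fst

/-- The set of initial (parentless) nodes. -/
def InitSet (E : Finset (V × V)) : Finset V :=
  Finset.univ.filter fun X => Pre E X = ∅

/-- Assignments over a subset `U` of the nodes. -/
abbrev Asg (U : Finset V) : Type := {x // x ∈ U} → Bool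

/-- A full assignment `b` agrees with a partial assignment `d` on `U`. -/
abbrev Agrees (b : V → Bool) (U : Finset V) (d : Asg U) : Prop :=
  ∀ x : {x // x ∈ U}, b x.1 = d x

/-- A generalized Bayesian network over node set `V`. -/
structure GBN (V : Type) [Fintype V] [DecidableEq V] where
  /-- the directed edges -/
  edges : Finset (V × V)
  /-- CPT entries: the probability of `X = T` given an assignment of the parents of `X` -/
  cpt : (X : V) → Asg (Pre edges X) → ℝ
  cpt_nonneg : ∀ X b, 0 ≤ cpt X b
  cpt_le_one : ∀ X b, cpt X b ≤ 1
  /-- the initial distribution over assignments of the initial nodes -/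
  ι : Asg (InitSet edges) → ℝ
  ι_dist : IsDist ι

/-- Probability of an event (set of full assignments) under `μ`. -/
def probIf (μ : (V → Bool) → ℝ) (p : (V → Bool) → Prop) : ℝ :=
  ∑ b : V → Bool, if p b then μ b else 0

/-- The marginal distribution of `μ` on `U`. -/
def marginal (μ : (V → Bool) → ℝ) (U : Finset V) : Asg U → ℝ :=
  fun d => probIf μ fun b => Agrees b U d

/-- `Pr(X = v | parents as given by b)`. -/
def copyProb (B : GBN V) (X : V) (v : Bool) (b : V → Bool) : ℝ :=
  if v then B.cpt X (fun p => b p.1) else 1 - B.cpt X (fun p => b p.1)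

/-- The standard BN semantics (chain rule) of a GBN. -/
def distBN (B : GBN V) (b : V → Bool) : ℝ :=
  B.ι (fun x => b x.1) *
    ∏ X ∈ Finset.univ \ InitSet B.edges, copyProb B X (b X) b

/-- The edge set contains no directed cycle. -/
def Acyclic (E : Finset (V × V)) : Prop :=
  ∀ x : V, ¬ Relation.TransGen (fun a b => (a, b) ∈ E) x x

/-- `C` is a cutset: every directed cycle contains a node of `C`. -/
def IsCutset (E : Finset (V × V)) (C : Finset V) : Prop :=
  ∀ x : V, ¬ Relation.TransGen (fun a b => (a, b) ∈ E ∧ a ∉ C ∧ b ∉ C) x x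

/-- The standard BN semantics of the `C`-dissected GBN `B↑C↑γ`, as a joint
distribution over assignments of the original nodes `V` together with
assignments of the copies `C'` of the cutset nodes. -/
def distDissect (B : GBN V) (C : Finset V) (γ : Asg C → ℝ)
    (b : V → Bool) (c : Asg C) : ℝ :=
  B.ι (fun x => b x.1) * γ (fun x => b x.1) *
    (∏ X ∈ (Finset.univ \ InitSet B.edges) \ C, copyProb B X (b X) b) *
    ∏ Y ∈ C.attach, copyProb B Y.1 (c Y) b

/-- `Next(B,C,γ)`: restrict `dist_BN(B↑C↑γ)` to `(V∖C) ∪ C'` and re-identify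
the copies with the original cutset nodes. -/
def Next (B : GBN V) (C : Finset V) (γ : Asg C → ℝ) (a : V → Bool) : ℝ :=
  ∑ b : V → Bool,
    if ∀ x : V, x ∉ C → b x = a x then distDissect B C γ b (fun y => a y.1) else 0

/-- `Extend(B,C,γ) = dist_BN(B↑C↑γ)|_V`. -/
def Extend (B : GBN V) (C : Finset V) (γ : Asg C → ℝ) (a : V → Bool) : ℝ :=
  ∑ c : Asg C, distDissect B C γ a c

/-- Dirac (point) distribution. -/
def DiracD {α : Type} [DecidableEq α] (b : α) : α → ℝ := fun c => if c = b then 1 else 0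

/-- Transition matrix of the cutset Markov chain `M_{B↑C}`:
`P(b,c) = Next(B,C,Dirac(b))|_C (c)`. -/
def cutsetP (B : GBN V) (C : Finset V) (b c : Asg C) : ℝ :=
  marginal (Next B C (DiracD b)) C c

/-- Vector-matrix multiplication `γ·P`. -/
def vecMul {α : Type} [Fintype α] (γ : α → ℝ) (P : α → α → ℝ) : α → ℝ :=
  fun c => ∑ b, γ b * P b c

/-- The transient distributions `γ0·P^n`. -/
def matIter {α : Type} [Fintype α] (P : α → α → ℝ) (γ0 : α → ℝ) : ℕ → (α → ℝ)
  | 0 => γ0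
  | n + 1 => vecMul (matIter P γ0 n) P

/-- The sequence `γ_{n+1} = Next(B,C,γ_n)|_C`. -/
def nextSeq (B : GBN V) (C : Finset V) (γ0 : Asg C → ℝ) : ℕ → (Asg C → ℝ)
  | 0 => γ0
  | n + 1 => marginal (Next B C (nextSeq B C γ0 n)) C

/-- Cesàro averages of a sequence of vectors. -/
def cesaro {α : Type} (f : ℕ → α → ℝ) (n : ℕ) : α → ℝ :=
  fun a => (∑ i ∈ Finset.range (n + 1), f i a) / (n + 1)

/-- The Markov chain semantics `[B]_{MC-C}`: image of
`γ0 ↦ Extend(B,C,lrf^{γ0})` over all initial cutset distributions `γ0`,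
where `lrf^{γ0}` is the Cesàro limit of the transient distributions. -/
def MCSem (B : GBN V) (C : Finset V) : Set ((V → Bool) → ℝ) :=
  { μ | ∃ γ0 γ, IsDist γ0 ∧
      Tendsto (cesaro (matIter (cutsetP B C) γ0)) atTop (nhds γ) ∧
      μ = Extend B C γ }

/-- The limit semantics `[B]_{Lim-C}`. -/
def LimSem (B : GBN V) (C : Finset V) : Set ((V → Bool) → ℝ) :=
  { μ | ∃ γ0 γ, IsDist γ0 ∧
      Tendsto (nextSeq B C γ0) atTop (nhds γ) ∧
      μ = Extend B C γ }

/-- The limit average semantics `[B]_{LimAvg-C}`. -/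
def LimAvgSem (B : GBN V) (C : Finset V) : Set ((V → Bool) → ℝ) :=
  { μ | ∃ γ0 γ, IsDist γ0 ∧
      Tendsto (cesaro (nextSeq B C γ0)) atTop (nhds γ) ∧
      μ = Extend B C γ }

/-- The Markov chain semantics in stationary-distribution form:
`{ Extend(B,C,γ) : γ a distribution with γ = γ·P }`. -/
def MCStatSem (B : GBN V) (C : Finset V) : Set ((V → Bool) → ℝ) :=
  { μ | ∃ γ : Asg C → ℝ, IsDist γ ∧ γ = vecMul γ (cutsetP B C) ∧ μ = Extend B C γ }

/-- Strong CPT-consistency of `μ` for node `X`. -/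
def StrongCPT (B : GBN V) (μ : (V → Bool) → ℝ) (X : V) : Prop :=
  ∀ c : Asg (Pre B.edges X),
    probIf μ (fun f => f X = true ∧ Agrees f (Pre B.edges X) c) =
      probIf μ (fun f => Agrees f (Pre B.edges X) c) * B.cpt X c

/-- Weak CPT-consistency of `μ` for node `X`. -/
def WeakCPT (B : GBN V) (μ : (V → Bool) → ℝ) (X : V) : Prop :=
  probIf μ (fun f => f X = true) =
    ∑ c : Asg (Pre B.edges X),
      probIf μ (fun f => Agrees f (Pre B.edges X) c) * B.cpt X c

/-- The CPT semantics `[B]_{Cpt}`. -/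
def CptSem (B : GBN V) : Set ((V → Bool) → ℝ) :=
  { μ | IsDist μ ∧ marginal μ (InitSet B.edges) = B.ι ∧
      ∀ X, X ∉ InitSet B.edges → StrongCPT B μ X }

/-- `(X ⊥ Y | Z) ∈ Indep(μ)`. -/
def IndepTriple (μ : (V → Bool) → ℝ) (X Y Z : Finset V) : Prop :=
  ∀ (a : Asg X) (b : Asg Y) (c : Asg Z),
    probIf μ (fun f => Agrees f Y b ∧ Agrees f Z c) = 0 ∨
    probIf μ (fun f => Agrees f X a ∧ Agrees f Y b ∧ Agrees f Z c) /
        probIf μ (fun f => Agrees f Y b ∧ Agrees f Z c) =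
      probIf μ (fun f => Agrees f X a ∧ Agrees f Z c) /
        probIf μ (fun f => Agrees f Z c)

def PairwiseDisjoint3 (X Y Z : Finset V) : Prop :=
  Disjoint X Y ∧ Disjoint X Z ∧ Disjoint Y Z

/-- `Indep(μ)` as a set of triples. -/
def IndepSet (μ : (V → Bool) → ℝ) : Set (Finset V × Finset V × Finset V) :=
  { t | PairwiseDisjoint3 t.1 t.2.1 t.2.2 ∧ IndepTriple μ t.1 t.2.1 t.2.2 }

/-- The CPT-I semantics `[B]_{Cpt-I}`. -/
def CptISem (B : GBN V) (I : Set (Finset V × Finset V × Finset V)) :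
    Set ((V → Bool) → ℝ) :=
  { μ | μ ∈ CptSem B ∧ I ⊆ IndepSet μ }

/-! d-separation -/

def Adjacent (E : Finset (V × V)) (x y : V) : Prop := (x, y) ∈ E ∨ (y, x) ∈ E

/-- Reachability along directed edges (including the node itself). -/
def Reaches (E : Finset (V × V)) (x y : V) : Prop :=
  Relation.ReflTransGen (fun a b => (a, b) ∈ E) x y

/-- An intermediate triple `a, w, b` on a path blocks it given `Z`:
either `w ∈ Z` and `w` lies in a chain or a fork, or `w` lies in a collider
and no node reachable from `w` (including `w`) is in `Z`. -/
def BlockedTriple (E : Finset (V × V)) (Z : Finset V) (a w b : V) : Prop :=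
  (w ∈ Z ∧ (((a, w) ∈ E ∧ (w, b) ∈ E) ∨ ((b, w) ∈ E ∧ (w, a) ∈ E) ∨
      ((w, a) ∈ E ∧ (w, b) ∈ E))) ∨
  ((a, w) ∈ E ∧ (b, w) ∈ E ∧ ∀ d, Reaches E w d → d ∉ Z)

/-- A path (as a list of nodes) is blocked given `Z`. -/
def Blocked (E : Finset (V × V)) (Z : Finset V) (W : List V) : Prop :=
  ∃ l₁ a w b l₂, W = l₁ ++ a :: w :: b :: l₂ ∧ BlockedTriple E Z a w b

/-- `x` and `y` are d-separated given `Z`: every undirected simple path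
from `x` to `y` is blocked given `Z`. -/
def DSepNodes (E : Finset (V × V)) (x y : V) (Z : Finset V) : Prop :=
  ∀ W : List V, W.Chain' (Adjacent E) → W.Nodup →
    W.head? = some x → W.getLast? = some y → Blocked E Z W

def DSep (E : Finset (V × V)) (X Y Z : Finset V) : Prop :=
  ∀ x ∈ X, ∀ y ∈ Y, DSepNodes E x y Z

/-- `d-sep(G)` as a set of triples of pairwise disjoint node sets. -/
def DSepSet (E : Finset (V × V)) : Set (Finset V × Finset V × Finset V) :=
  { t | PairwiseDisjoint3 t.1 t.2.1 t.2.2 ∧ DSep E t.1 t.2.1 t.2.2 }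

/-- `Close(G)`: add an edge between every ordered pair of distinct initial nodes. -/
def Close (E : Finset (V × V)) : Finset (V × V) :=
  E ∪ ((InitSet E ×ˢ InitSet E).filter fun p => p.1 ≠ p.2)

/-- `G[C]`: remove all edges into nodes of `C` (so the nodes of `C` are initial). -/
def CutGraph (E : Finset (V × V)) (C : Finset V) : Finset (V × V) :=
  E.filter fun e => e.2 ∉ C

/-- `ι` is a product distribution: it factorizes into its single-node marginals,
i.e. the initial nodes are mutually independent under `ι`. -/
def IsProductDist {U : Finset V} (ι : Asg U → ℝ) : Prop :=
  ∀ b : Asg U,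
    ι b = ∏ x : {x // x ∈ U}, ∑ b' : Asg U, if b' x = b x then ι b' else 0

/-! Markov chain notions -/

/-- Reachability in the underlying graph of a DTMC. -/
def MCReach {α : Type} (P : α → α → ℝ) (x y : α) : Prop :=
  Relation.ReflTransGen (fun a b => 0 < P a b) x y

/-- Bottom strongly connected component of a DTMC: nonempty, closed under
reachability, and strongly connected. -/
def IsBSCC {α : Type} (P : α → α → ℝ) (D : Set α) : Prop :=
  D.Nonempty ∧ (∀ x ∈ D, ∀ y, MCReach P x y → y ∈ D) ∧
    ∀ x ∈ D, ∀ y ∈ D, MCReach P x y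

/-- Walks of a given length along positive-probability transitions. -/
def walkLen {α : Type} (P : α → α → ℝ) : ℕ → α → α → Prop
  | 0, x, y => x = y
  | n + 1, x, y => ∃ z, 0 < P x z ∧ walkLen P n z y

/-- The lengths of the cycles of `D`. -/
def CycleLens {α : Type} (P : α → α → ℝ) (D : Set α) : Set ℕ :=
  { n | 0 < n ∧ ∃ x ∈ D, walkLen P n x x }

/-- `D` is aperiodic: the gcd of the lengths of its cycles equals 1. -/
def AperiodicBSCC {α : Type} (P : α → α → ℝ) (D : Set α) : Prop :=
  ∀ d : ℕ, (∀ n ∈ CycleLens P D, d ∣ n) → d = 1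

/-- `D` is periodic: the gcd of the lengths of its cycles is greater than 1. -/
def PeriodicBSCC {α : Type} (P : α → α → ℝ) (D : Set α) : Prop :=
  ∃ d : ℕ, 1 < d ∧ ∀ n ∈ CycleLens P D, d ∣ n

/-- A GBN is smooth if all CPT entries and all values of `ι` lie in `(0,1)`. -/
def Smooth (B : GBN V) : Prop :=
  (∀ X b, B.cpt X b ∈ Set.Ioo (0 : ℝ) 1) ∧ ∀ d, B.ι d ∈ Set.Ioo (0 : ℝ) 1

/-!
`Next(B, C, γ)` is linear in `γ`, so `Next(B, C, γ)|_C = γ·P`, which is (a) ⇔ (d). The cutset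
hypothesis makes the non-initial nodes outside `C` acyclic, so their CPT factors sum out one source
at a time and `P` is substochastic. Rows may sum to less than one, because `ι` and a Dirac cutset
distribution both constrain the initial nodes that lie in `C`.

For a substochastic `P`, the Cesàro averages of `γ₀·Pⁿ` are moved by `P` only by
`(γ₀·Pⁿ⁺¹ - γ₀)/(n+1) → 0`, so all their cluster points are stationary. This gives (b) ⇒ (a)
and, stationarity being a convex condition, (c) ⇒ (a). Conversely, a stationary distribution `γ`
cannot leak mass, so its support is a union of bottom SCCs on which `P` is stochastic. Started
inside such an SCC, the Cesàro averages stay in the compact set of distributions on it, where the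
stationary distribution is unique, so they converge. Averaging `γ = γ·Pⁿ` over `n` then writes
`γ` as the `γ`-weighted convex combination of these limits.
-/

section MarkovChain

variable {α : Type} [Fintype α] {P : α → α → ℝ}

lemma vecMul_eq_matrix_vecMul (γ : α → ℝ) (P : α → α → ℝ) :
    vecMul γ P = Matrix.vecMul γ (Matrix.of P) := rfl

lemma sum_vecMul (μ : α → ℝ) (P : α → α → ℝ) : ∑ c, vecMul μ P c = ∑ a, μ a * ∑ c, P a c := by
  simp only [vecMul, Finset.mul_sum]
  exact Finset.sum_comm

lemma continuous_vecMul (P : α → α → ℝ) : Continuous fun μ : α → ℝ => vecMul μ P := by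
  unfold vecMul; fun_prop

lemma convex_setOf_stationary (P : α → α → ℝ) : Convex ℝ {γ : α → ℝ | γ = vecMul γ P} := by
  intro μ hμ ν hν a b _ _ _
  change μ = Matrix.vecMul μ (Matrix.of P) at hμ
  change ν = Matrix.vecMul ν (Matrix.of P) at hν
  change _ = Matrix.vecMul _ (Matrix.of P)
  rw [Matrix.add_vecMul, Matrix.smul_vecMul, Matrix.smul_vecMul, ← hμ, ← hν]

omit [Fintype α] in
lemma DiracD_nonneg [DecidableEq α] (x z : α) : 0 ≤ DiracD x z := by
  unfold DiracD; split_ifs <;> norm_num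

lemma isDist_DiracD [DecidableEq α] (x : α) : IsDist (DiracD x) :=
  ⟨DiracD_nonneg x, by simp [DiracD]⟩

omit [Fintype α] in
lemma DiracD_eq_single [DecidableEq α] (x : α) : DiracD x = Pi.single x (1 : ℝ) := by
  ext c; simp [DiracD, Pi.single_apply]

lemma matIter_eq_vecMul_pow [DecidableEq α] (P : α → α → ℝ) (γ0 : α → ℝ) (n : ℕ) :
    matIter P γ0 n = Matrix.vecMul γ0 (Matrix.of P ^ n) := by
  induction n with
  | zero => simp [matIter]
  | succ n ih => rw [pow_succ, ← Matrix.vecMul_vecMul, ← ih]; rfl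

lemma matIter_eq_sum_smul [DecidableEq α] (P : α → α → ℝ) (γ0 : α → ℝ) (n : ℕ) :
    matIter P γ0 n = ∑ x, γ0 x • matIter P (DiracD x) n := by
  simp only [matIter_eq_vecMul_pow, DiracD_eq_single, Matrix.single_one_vecMul]
  exact Matrix.vecMul_eq_sum _ _

lemma matIter_of_stationary {γ : α → ℝ} (h : γ = vecMul γ P) (n : ℕ) : matIter P γ n = γ := by
  induction n with
  | zero => rfl
  | succ n ih => rw [matIter, ih, ← h]

omit [Fintype α] in
lemma cesaro_eq_smul_sum (f : ℕ → α → ℝ) (n : ℕ) :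
    cesaro f n = (1 / (n + 1 : ℝ)) • ∑ i ∈ Finset.range (n + 1), f i := by
  ext a; simp [cesaro, div_eq_inv_mul, Finset.mul_sum]

omit [Fintype α] in
lemma cesaro_mem {s : Set (α → ℝ)} (hs : Convex ℝ s) {f : ℕ → α → ℝ} (hf : ∀ i, f i ∈ s)
    (n : ℕ) : cesaro f n ∈ s := by
  rw [cesaro_eq_smul_sum, Finset.smul_sum]
  refine hs.sum_mem (fun _ _ => by positivity) ?_ fun i _ => hf i
  simp only [Finset.sum_const, Finset.card_range, nsmul_eq_mul]
  push_cast
  field_simp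

lemma cesaro_matIter_eq_sum_smul [DecidableEq α] (P : α → α → ℝ) (γ0 : α → ℝ) (n : ℕ) :
    cesaro (matIter P γ0) n = ∑ x, γ0 x • cesaro (matIter P (DiracD x)) n := by
  simp only [cesaro_eq_smul_sum, matIter_eq_sum_smul P γ0, Finset.smul_sum]
  rw [Finset.sum_comm]
  simp only [smul_comm (1 / ((n : ℝ) + 1))]

lemma tendsto_cesaro_of_stationary {γ : α → ℝ} (h : γ = vecMul γ P) :
    Tendsto (cesaro (matIter P γ)) atTop (nhds γ) := by
  have hconst : ∀ n, cesaro (matIter P γ) n = γ := fun n =>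
    cesaro_mem (convex_singleton γ) (matIter_of_stationary h) n
  rw [funext hconst]
  exact tendsto_const_nhds

lemma vecMul_cesaro_sub_cesaro (γ0 : α → ℝ) (n : ℕ) :
    vecMul (cesaro (matIter P γ0) n) P - cesaro (matIter P γ0) n =
      (1 / (n + 1 : ℝ)) • (matIter P γ0 (n + 1) - γ0) := by
  rw [cesaro_eq_smul_sum, vecMul_eq_matrix_vecMul, Matrix.smul_vecMul, Matrix.sum_vecMul,
    ← smul_sub, ← Finset.sum_sub_distrib]
  exact congrArg _ (Finset.sum_range_sub (matIter P γ0) (n + 1))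

lemma stationary_of_mapClusterPt_cesaro {γ0 η : α → ℝ} {M : ℝ}
    (hbdd : ∀ n, ‖matIter P γ0 n‖ ≤ M)
    (h : MapClusterPt η atTop (cesaro (matIter P γ0))) : η = vecMul η P := by
  obtain ⟨ψ, hψ, hlim⟩ := h.tendsto_subseq
  have hdrift : Tendsto (fun n => vecMul (cesaro (matIter P γ0) n) P - cesaro (matIter P γ0) n)
      atTop (nhds 0) := by
    simp_rw [vecMul_cesaro_sub_cesaro]
    refine tendsto_one_div_add_atTop_nhds_zero_nat.zero_smul_isBoundedUnder_le
      (isBoundedUnder_of ⟨M + M, fun n => (norm_sub_le _ _).trans ?_⟩)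
    exact add_le_add (hbdd (n + 1)) (hbdd 0)
  have hcont := ((continuous_vecMul P).sub continuous_id).tendsto η
  exact (sub_eq_zero.1 (tendsto_nhds_unique (hcont.comp hlim) (hdrift.comp hψ.tendsto_atTop))).symm

lemma stationary_of_tendsto_cesaro {γ0 γ : α → ℝ} {M : ℝ} (hbdd : ∀ n, ‖matIter P γ0 n‖ ≤ M)
    (h : Tendsto (cesaro (matIter P γ0)) atTop (nhds γ)) : γ = vecMul γ P :=
  stationary_of_mapClusterPt_cesaro hbdd h.mapClusterPt

lemma norm_le_one_of_nonneg_of_sum_le_one {μ : α → ℝ} (h0 : ∀ a, 0 ≤ μ a) (h1 : ∑ a, μ a ≤ 1) :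
    ‖μ‖ ≤ 1 := by
  refine (pi_norm_le_iff_of_nonneg zero_le_one).2 fun a => ?_
  rw [Real.norm_of_nonneg (h0 a)]
  exact (Finset.single_le_sum (fun b _ => h0 b) (Finset.mem_univ a)).trans h1

lemma norm_matIter_le_one (hP0 : ∀ x y, 0 ≤ P x y) (hP1 : ∀ x, ∑ y, P x y ≤ 1)
    {γ0 : α → ℝ} (hγ0 : IsDist γ0) (n : ℕ) : ‖matIter P γ0 n‖ ≤ 1 := by
  suffices h : (∀ a, 0 ≤ matIter P γ0 n a) ∧ ∑ a, matIter P γ0 n a ≤ 1 from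
    norm_le_one_of_nonneg_of_sum_le_one h.1 h.2
  induction n with
  | zero => exact ⟨hγ0.1, hγ0.2.le⟩
  | succ n ih =>
    refine ⟨fun c => Finset.sum_nonneg fun a _ => mul_nonneg (ih.1 a) (hP0 a c), ?_⟩
    rw [matIter, sum_vecMul]
    refine le_trans (Finset.sum_le_sum fun a _ => ?_) ih.2
    exact mul_le_of_le_one_right (ih.1 a) (hP1 a)

lemma pos_of_stationary_of_reach (hP0 : ∀ x y, 0 ≤ P x y) {ξ : α → ℝ} (hst : ξ = vecMul ξ P)
    (hξ : ∀ a, 0 ≤ ξ a) {x y : α} (hx : 0 < ξ x) (hxy : MCReach P x y) : 0 < ξ y := by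
  induction hxy with
  | refl => exact hx
  | @tail z w _ hzw ih =>
    rw [hst]
    exact (mul_pos ih hzw).trans_le <| Finset.single_le_sum (f := fun a => ξ a * P a w)
      (fun a _ => mul_nonneg (hξ a) (hP0 a w)) (Finset.mem_univ z)

lemma sum_row_eq_one_of_stationary (hP1 : ∀ x, ∑ y, P x y ≤ 1) {γ : α → ℝ}
    (hst : γ = vecMul γ P) (hγ : ∀ a, 0 ≤ γ a) {x : α} (hx : 0 < γ x) : ∑ y, P x y = 1 := by
  by_contra hne
  have hlt : ∑ a, γ a * ∑ y, P a y < ∑ a, γ a := by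
    refine Finset.sum_lt_sum (fun a _ => mul_le_of_le_one_right (hγ a) (hP1 a))
      ⟨x, Finset.mem_univ x, mul_lt_of_lt_one_right hx ((hP1 x).lt_of_ne hne)⟩
  rw [← sum_vecMul, ← hst] at hlt
  exact lt_irrefl _ hlt

/-- The complement of the closed set `A` must keep its stationary mass, but it receives nothing
from `A` and loses whatever it sends into `A`. -/
lemma eq_zero_of_stationary_of_closed (hP0 : ∀ x y, 0 ≤ P x y) (hP1 : ∀ x, ∑ y, P x y ≤ 1)
    {γ : α → ℝ} (hst : γ = vecMul γ P) (hγ : ∀ a, 0 ≤ γ a) {A : Finset α}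
    (hA : ∀ a ∈ A, ∀ z, 0 < P a z → z ∈ A) {v z : α} (hv : v ∉ A) (hγv : 0 < γ v)
    (hz : z ∈ A) : P v z = 0 := by
  have hout : ∀ a ∈ A, ∑ w ∈ Aᶜ, P a w = 0 := fun a ha =>
    Finset.sum_eq_zero fun w hw => ((hP0 a w).eq_or_lt.resolve_right
      fun h => Finset.mem_compl.1 hw (hA a ha w h)).symm
  have hbal : ∑ w ∈ Aᶜ, γ w = ∑ a ∈ Aᶜ, γ a * ∑ w ∈ Aᶜ, P a w := by
    calc ∑ w ∈ Aᶜ, γ w = ∑ a, γ a * ∑ w ∈ Aᶜ, P a w := by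
          conv_lhs => rw [hst]
          simp only [vecMul, Finset.mul_sum]
          exact Finset.sum_comm
      _ = _ := by
          rw [← Finset.sum_add_sum_compl A,
            Finset.sum_eq_zero fun a ha => by rw [hout a ha, mul_zero], zero_add]
  have hinflow_nonneg : ∀ a, 0 ≤ γ a * ∑ w ∈ A, P a w := fun a =>
    mul_nonneg (hγ a) (Finset.sum_nonneg fun w _ => hP0 a w)
  have hinflow : ∑ a ∈ Aᶜ, γ a * ∑ w ∈ A, P a w ≤ 0 := by
    calc ∑ a ∈ Aᶜ, γ a * ∑ w ∈ A, P a w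
        ≤ ∑ a ∈ Aᶜ, γ a * (1 - ∑ w ∈ Aᶜ, P a w) := by
          refine Finset.sum_le_sum fun a _ => mul_le_mul_of_nonneg_left ?_ (hγ a)
          linarith [(Finset.sum_add_sum_compl A (P a)).trans_le (hP1 a)]
      _ = 0 := by simp only [mul_sub, mul_one, Finset.sum_sub_distrib, ← hbal, sub_self]
  have hv_inflow := (Finset.sum_eq_zero_iff_of_nonneg fun a _ => hinflow_nonneg a).1
    (hinflow.antisymm (Finset.sum_nonneg fun a _ => hinflow_nonneg a)) v (Finset.mem_compl.2 hv)
  exact (Finset.sum_eq_zero_iff_of_nonneg fun w _ => hP0 v w).1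
    ((mul_eq_zero.1 hv_inflow).resolve_left hγv.ne') z hz

omit [Fintype α] in
lemma MCReach.exists_edge_into {A : Set α} {x y : α} (hxy : MCReach P x y) (hx : x ∉ A)
    (hy : y ∈ A) : ∃ u w, MCReach P x u ∧ u ∉ A ∧ w ∈ A ∧ 0 < P u w := by
  induction hxy with
  | refl => exact absurd hy hx
  | @tail u w hxu huw ih =>
    by_cases hu : u ∈ A
    · exact ih hu
    · exact ⟨u, w, hxu, hu, hy, huw⟩

lemma isBSCC_reach_of_stationary (hP0 : ∀ x y, 0 ≤ P x y) (hP1 : ∀ x, ∑ y, P x y ≤ 1)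
    {γ : α → ℝ} (hst : γ = vecMul γ P) (hγ : ∀ a, 0 ≤ γ a) {x : α} (hx : 0 < γ x) :
    IsBSCC P {z | MCReach P x z} := by
  refine ⟨⟨x, .refl⟩, fun y hy z hz => hy.trans hz, fun y hy z hz => ?_⟩
  suffices hyx : MCReach P y x from hyx.trans hz
  by_contra hyx
  let A : Finset α := Finset.univ.filter (MCReach P y)
  obtain ⟨u, w, hxu, hu, hw, huw⟩ := MCReach.exists_edge_into (A := (A : Set α)) hy
    (by simpa [A] using hyx) (Finset.mem_filter.2 ⟨Finset.mem_univ y, .refl⟩)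
  refine huw.ne' (eq_zero_of_stationary_of_closed hP0 hP1 hst hγ (A := A) ?_ hu
    (pos_of_stationary_of_reach hP0 hst hγ hx hxu) hw)
  intro a ha b hab
  simp only [A, Finset.mem_filter, Finset.mem_univ, true_and] at ha ⊢
  exact ha.tail hab

def distsOn (D : Set α) : Set (α → ℝ) := {μ | IsDist μ ∧ ∀ z ∉ D, μ z = 0}

lemma isCompact_distsOn (D : Set α) : IsCompact (distsOn D) := by
  have hclosed : IsClosed (distsOn D) := by
    have : distsOn D = (⋂ a, {μ : α → ℝ | 0 ≤ μ a}) ∩ {μ | ∑ a, μ a = 1} ∩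
        ⋂ z ∈ Dᶜ, {μ | μ z = 0} := by
      ext; simp [distsOn, IsDist]
    rw [this]
    exact ((isClosed_iInter fun a => isClosed_le continuous_const (continuous_apply a)).inter
      (isClosed_eq (continuous_finsetSum _ fun a _ => continuous_apply a) continuous_const)).inter
      (isClosed_biInter fun z _ => isClosed_eq (continuous_apply z) continuous_const)
  refine (isCompact_univ_pi fun _ => isCompact_Icc (a := (0 : ℝ)) (b := 1)).of_isClosed_subset
    hclosed fun μ hμ a _ => ⟨hμ.1.1 a, ?_⟩
  exact (Finset.single_le_sum (fun b _ => hμ.1.1 b) (Finset.mem_univ a)).trans hμ.1.2.le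

lemma convex_distsOn (D : Set α) : Convex ℝ (distsOn D) := by
  rintro μ ⟨⟨hμ0, hμ1⟩, hμD⟩ ν ⟨⟨hν0, hν1⟩, hνD⟩ a b ha hb hab
  refine ⟨⟨fun z => ?_, ?_⟩, fun z hz => ?_⟩
  · simp only [Pi.add_apply, Pi.smul_apply, smul_eq_mul]
    exact add_nonneg (mul_nonneg ha (hμ0 z)) (mul_nonneg hb (hν0 z))
  · simp [Finset.sum_add_distrib, ← Finset.mul_sum, hμ1, hν1, hab]
  · simp [hμD z hz, hνD z hz]

lemma DiracD_mem_distsOn [DecidableEq α] {D : Set α} {x : α} (hx : x ∈ D) :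
    DiracD x ∈ distsOn D :=
  ⟨isDist_DiracD x, fun z hz => by simp [DiracD, show z ≠ x from fun h => hz (h ▸ hx)]⟩

lemma vecMul_mem_distsOn (hP0 : ∀ x y, 0 ≤ P x y) {D : Set α}
    (hD : ∀ a ∈ D, ∀ z, 0 < P a z → z ∈ D) (hrow : ∀ a ∈ D, ∑ y, P a y = 1) {μ : α → ℝ}
    (hμ : μ ∈ distsOn D) : vecMul μ P ∈ distsOn D := by
  obtain ⟨⟨hμ0, hμ1⟩, hμD⟩ := hμ
  refine ⟨⟨fun c => Finset.sum_nonneg fun a _ => mul_nonneg (hμ0 a) (hP0 a c), ?_⟩,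
    fun z hz => Finset.sum_eq_zero fun a _ => ?_⟩
  · rw [sum_vecMul, ← hμ1]
    refine Finset.sum_congr rfl fun a _ => ?_
    by_cases ha : a ∈ D
    · rw [hrow a ha, mul_one]
    · rw [hμD a ha, zero_mul]
  · by_cases ha : a ∈ D
    · rw [← (hP0 a z).eq_or_lt.resolve_right fun h => hz (hD a ha z h), mul_zero]
    · rw [hμD a ha, zero_mul]

lemma eq_zero_of_stationary_of_eq_zero (hP0 : ∀ x y, 0 ≤ P x y) {D : Set α}
    (hD : ∀ x ∈ D, ∀ y ∈ D, MCReach P x y) {ξ : α → ℝ} (hst : ξ = vecMul ξ P)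
    (hξ : ∀ a, 0 ≤ ξ a) (hξD : ∀ z ∉ D, ξ z = 0) {z0 : α} (hz0 : z0 ∈ D) (hξz0 : ξ z0 = 0) :
    ξ = 0 := by
  ext z
  by_cases hz : z ∈ D
  · by_contra hne
    exact (pos_of_stationary_of_reach hP0 hst hξ ((hξ z).lt_of_ne' hne)
      (hD z hz z0 hz0)).ne' hξz0
  · exact hξD z hz

/-- With `c` the minimal ratio `η' z / η z` over `D`, `η' - c • η` is a nonnegative stationary
vector vanishing somewhere on `D`, hence zero. -/
lemma eq_of_stationary_of_mem_distsOn (hP0 : ∀ x y, 0 ≤ P x y) {D : Set α}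
    (hD : ∀ x ∈ D, ∀ y ∈ D, MCReach P x y) {η η' : α → ℝ} (hη : η ∈ distsOn D)
    (hη' : η' ∈ distsOn D) (hst : η = vecMul η P) (hst' : η' = vecMul η' P) : η' = η := by
  obtain ⟨w, hw⟩ : ∃ w, 0 < η w := by
    by_contra! h
    linarith [hη.1.2, Finset.sum_nonpos fun a (_ : a ∈ Finset.univ) => h a]
  have hwD : w ∈ D := by_contra fun h => hw.ne' (hη.2 w h)
  have hpos : ∀ z ∈ D, 0 < η z := fun z hz =>
    pos_of_stationary_of_reach hP0 hst hη.1.1 hw (hD w hwD z hz)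
  obtain ⟨z0, hz0, hmin⟩ := Finset.exists_min_image (Finset.univ.filter (· ∈ D))
    (fun z => η' z / η z) ⟨w, by simpa using hwD⟩
  simp only [Finset.mem_filter, Finset.mem_univ, true_and] at hz0 hmin
  set c := η' z0 / η z0
  have hξ : η' - c • η = 0 := by
    refine eq_zero_of_stationary_of_eq_zero hP0 hD ?_ (fun z => ?_) (fun z hz => ?_) hz0 ?_
    · rw [vecMul_eq_matrix_vecMul, Matrix.sub_vecMul, Matrix.smul_vecMul,
        ← vecMul_eq_matrix_vecMul, ← vecMul_eq_matrix_vecMul, ← hst, ← hst']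
    · by_cases hz : z ∈ D
      · simpa [← le_div_iff₀ (hpos z hz)] using hmin z hz
      · simp [hη.2 z hz, hη'.2 z hz]
    · simp [hη.2 z hz, hη'.2 z hz]
    · simp [c, div_mul_cancel₀ _ (hpos z0 hz0).ne']
  have hη'c : η' = c • η := sub_eq_zero.1 hξ
  have hc : c = 1 := by
    have := congrArg (fun μ : α → ℝ => ∑ a, μ a) hη'c
    simpa [← Finset.mul_sum, hη.1.2, hη'.1.2] using this.symm
  rw [hη'c, hc, one_smul]

lemma exists_tendsto_cesaro_of_isBSCC [DecidableEq α] (hP0 : ∀ x y, 0 ≤ P x y) {D : Set α}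
    (hD : IsBSCC P D) (hrow : ∀ a ∈ D, ∑ y, P a y = 1) {x : α} (hx : x ∈ D) :
    ∃ ν, Tendsto (cesaro (matIter P (DiracD x))) atTop (nhds ν) := by
  have hiter : ∀ n, matIter P (DiracD x) n ∈ distsOn D := by
    intro n
    induction n with
    | zero => exact DiracD_mem_distsOn hx
    | succ n ih =>
      exact vecMul_mem_distsOn hP0 (fun a ha z h => hD.2.1 a ha z (.single h)) hrow ih
  have hbdd : ∀ n, ‖matIter P (DiracD x) n‖ ≤ 1 := fun n =>
    norm_le_one_of_nonneg_of_sum_le_one (hiter n).1.1 (hiter n).1.2.le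
  have havg := cesaro_mem (convex_distsOn D) hiter
  have hK := isCompact_distsOn D
  obtain ⟨ν, hνK, hν⟩ := hK.exists_mapClusterPt (f := atTop)
    (tendsto_principal.2 (Eventually.of_forall havg))
  refine ⟨ν, hK.tendsto_nhds_of_unique_mapClusterPt (Eventually.of_forall havg)
    fun η hηK hη => ?_⟩
  exact eq_of_stationary_of_mem_distsOn hP0 hD.2.2 hνK hηK
    (stationary_of_mapClusterPt_cesaro hbdd hν) (stationary_of_mapClusterPt_cesaro hbdd hη)

def bsccLongRunFreqs [DecidableEq α] (P : α → α → ℝ) : Set (α → ℝ) :=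
  {ν | ∃ D : Set α, ∃ x ∈ D, IsBSCC P D ∧ Tendsto (cesaro (matIter P (DiracD x))) atTop (nhds ν)}

lemma mem_convexHull_bsccLongRunFreqs [DecidableEq α] (hP0 : ∀ x y, 0 ≤ P x y)
    (hP1 : ∀ x, ∑ y, P x y ≤ 1) {γ : α → ℝ} (hγ : IsDist γ) (hst : γ = vecMul γ P) :
    γ ∈ convexHull ℝ (bsccLongRunFreqs P) := by
  have hlrf : ∀ x, 0 < γ x → ∃ ν, Tendsto (cesaro (matIter P (DiracD x))) atTop (nhds ν) ∧
      ν ∈ bsccLongRunFreqs P := by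
    intro x hx
    have hD := isBSCC_reach_of_stationary hP0 hP1 hst hγ.1 hx
    obtain ⟨ν, hν⟩ := exists_tendsto_cesaro_of_isBSCC hP0 hD (fun a ha =>
      sum_row_eq_one_of_stationary hP1 hst hγ.1 (pos_of_stationary_of_reach hP0 hst hγ.1 hx ha))
      (Relation.ReflTransGen.refl : MCReach P x x)
    exact ⟨ν, hν, _, x, .refl, hD, hν⟩
  choose! ν hν hνS using hlrf
  set s := Finset.univ.filter (fun x => 0 < γ x)
  have hs : ∀ x ∈ Finset.univ, γ x ≠ 0 → 0 < γ x := fun x _ h => (hγ.1 x).lt_of_ne' h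
  have hγ_eq : γ = ∑ x ∈ s, γ x • ν x := by
    refine tendsto_nhds_unique (tendsto_cesaro_of_stationary hst) ?_
    have hsplit : cesaro (matIter P γ) =
        fun n => ∑ x ∈ s, γ x • cesaro (matIter P (DiracD x)) n := by
      ext1 n
      rw [cesaro_matIter_eq_sum_smul, Finset.sum_filter_of_ne fun x hx h => hs x hx
        fun h0 => h (by rw [h0, zero_smul])]
    rw [hsplit]
    exact tendsto_finsetSum _ fun x hx => (hν x (Finset.mem_filter.1 hx).2).const_smul (γ x)
  rw [hγ_eq]
  exact (convex_convexHull ℝ _).sum_mem (fun x _ => hγ.1 x)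
    ((Finset.sum_filter_of_ne hs).trans hγ.2)
    fun x hx => subset_convexHull ℝ _ (hνS x (Finset.mem_filter.1 hx).2)

lemma stationary_of_mem_convexHull_bsccLongRunFreqs [DecidableEq α] (hP0 : ∀ x y, 0 ≤ P x y)
    (hP1 : ∀ x, ∑ y, P x y ≤ 1) {γ : α → ℝ} (hγ : γ ∈ convexHull ℝ (bsccLongRunFreqs P)) :
    γ = vecMul γ P := by
  refine convexHull_min ?_ (convex_setOf_stationary P) hγ
  rintro ν ⟨D, x, -, -, hν⟩
  exact stationary_of_tendsto_cesaro (norm_matIter_le_one hP0 hP1 (isDist_DiracD x)) hν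

theorem stationary_iff_exists_tendsto_cesaro (hP0 : ∀ x y, 0 ≤ P x y)
    (hP1 : ∀ x, ∑ y, P x y ≤ 1) {γ : α → ℝ} (hγ : IsDist γ) :
    γ = vecMul γ P ↔ ∃ γ0, IsDist γ0 ∧ Tendsto (cesaro (matIter P γ0)) atTop (nhds γ) :=
  ⟨fun hst => ⟨γ, hγ, tendsto_cesaro_of_stationary hst⟩, fun ⟨_, hγ0, hlim⟩ =>
    stationary_of_tendsto_cesaro (norm_matIter_le_one hP0 hP1 hγ0) hlim⟩

theorem stationary_iff_mem_convexHull_bsccLongRunFreqs [DecidableEq α]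
    (hP0 : ∀ x y, 0 ≤ P x y) (hP1 : ∀ x, ∑ y, P x y ≤ 1) {γ : α → ℝ} (hγ : IsDist γ) :
    γ = vecMul γ P ↔ γ ∈ convexHull ℝ (bsccLongRunFreqs P) :=
  ⟨mem_convexHull_bsccLongRunFreqs hP0 hP1 hγ,
    stationary_of_mem_convexHull_bsccLongRunFreqs hP0 hP1⟩

end MarkovChain

omit [Fintype V] in
lemma mem_Pre {E : Finset (V × V)} {x y : V} : x ∈ Pre E y ↔ (x, y) ∈ E := by
  simp [Pre]

lemma copyProb_congr (B : GBN V) (X : V) (v : Bool) {b b' : V → Bool}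
    (h : ∀ p ∈ Pre B.edges X, b p = b' p) : copyProb B X v b = copyProb B X v b' := by
  have : (Pre B.edges X).restrict b = (Pre B.edges X).restrict b' := funext fun p => h p p.2
  exact congrArg (fun r => if v then B.cpt X r else 1 - B.cpt X r) this

lemma sum_copyProb (B : GBN V) (X : V) (b : V → Bool) : ∑ v, copyProb B X v b = 1 := by
  simp [copyProb]

lemma copyProb_nonneg (B : GBN V) (X : V) (v : Bool) (b : V → Bool) : 0 ≤ copyProb B X v b := by
  unfold copyProb
  split_ifs
  · exact B.cpt_nonneg X _
  · exact sub_nonneg.2 (B.cpt_le_one X _)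

lemma distDissect_nonneg (B : GBN V) (C : Finset V) {γ : Asg C → ℝ} (hγ : ∀ d, 0 ≤ γ d)
    (b : V → Bool) (c : Asg C) : 0 ≤ distDissect B C γ b c :=
  mul_nonneg (mul_nonneg (mul_nonneg (B.ι_dist.1 _) (hγ _))
    (Finset.prod_nonneg fun X _ => copyProb_nonneg B X _ b))
    (Finset.prod_nonneg fun Y _ => copyProb_nonneg B Y _ b)

lemma cutsetP_nonneg (B : GBN V) (C : Finset V) (d c : Asg C) : 0 ≤ cutsetP B C d c := by
  refine Finset.sum_nonneg fun a _ => ?_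
  split_ifs
  · refine Finset.sum_nonneg fun b _ => ?_
    split_ifs
    · exact distDissect_nonneg B C (DiracD_nonneg d) b _
    · exact le_rfl
  · exact le_rfl

lemma distDissect_eq_sum (B : GBN V) (C : Finset V) (γ : Asg C → ℝ) (b : V → Bool) (c : Asg C) :
    distDissect B C γ b c = ∑ d, γ d * distDissect B C (DiracD d) b c := by
  simp only [distDissect, DiracD, mul_ite, ite_mul, mul_one, mul_zero, zero_mul,
    Finset.sum_ite_eq, Finset.mem_univ, if_true]
  ring

lemma Next_eq_sum (B : GBN V) (C : Finset V) (γ : Asg C → ℝ) (a : V → Bool) :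
    Next B C γ a = ∑ d, γ d * Next B C (DiracD d) a := by
  simp only [Next, distDissect_eq_sum B C γ, Finset.mul_sum, mul_ite, mul_zero,
    Finset.ite_sum_zero]
  exact Finset.sum_comm

lemma probIf_sum_mul {ι : Type} [Fintype ι] (w : ι → ℝ) (μ : ι → (V → Bool) → ℝ)
    (p : (V → Bool) → Prop) :
    probIf (fun b => ∑ i, w i * μ i b) p = ∑ i, w i * probIf (μ i) p := by
  simp only [probIf, Finset.mul_sum, mul_ite, mul_zero, Finset.ite_sum_zero]
  exact Finset.sum_comm

lemma marginal_Next_eq_vecMul (B : GBN V) (C : Finset V) (γ : Asg C → ℝ) :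
    marginal (Next B C γ) C = vecMul γ (cutsetP B C) := by
  ext c
  simp only [marginal, funext (Next_eq_sum B C γ), probIf_sum_mul]
  rfl

def extensions (S : Finset V) (b0 : V → Bool) : Finset (V → Bool) :=
  Finset.univ.filter fun b => ∀ x ∉ S, b x = b0 x

lemma sum_extensions_insert {X : V} {T : Finset V} (hX : X ∉ T) (b0 : V → Bool)
    (f : (V → Bool) → ℝ) :
    ∑ b ∈ extensions (insert X T) b0, f b =
      ∑ v : Bool, ∑ b ∈ extensions T (Function.update b0 X v), f b := by
  rw [← Finset.sum_fiberwise (extensions (insert X T) b0) (fun b => b X)]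
  refine Finset.sum_congr rfl fun v _ => Finset.sum_congr ?_ fun _ _ => rfl
  ext b
  simp only [extensions, Finset.mem_filter, Finset.mem_univ, true_and, Finset.mem_insert,
    not_or, Function.update_apply]
  constructor
  · rintro ⟨hb, rfl⟩ x hx
    split_ifs with h
    · rw [h]
    · exact hb x ⟨h, hx⟩
  · intro hb
    exact ⟨fun x hx => by simpa [hx.1] using hb x hx.2, by simpa using hb X hX⟩

lemma sum_extensions_restrict (C : Finset V) (b : V → Bool) (g : Asg C → ℝ) :
    ∑ a ∈ extensions C b, g (C.restrict a) = ∑ c, g c := by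
  refine Finset.sum_nbij' C.restrict (fun c x => if h : x ∈ C then c ⟨x, h⟩ else b x)
    (fun _ _ => Finset.mem_univ _) (fun c _ => ?_) (fun a ha => ?_) (fun c _ => ?_)
    (fun _ _ => rfl)
  · simp +contextual [extensions]
  · simp only [extensions, Finset.mem_filter, Finset.mem_univ, true_and] at ha
    ext x
    split_ifs with h
    · rfl
    · exact (ha x h).symm
  · ext y
    simp

omit [DecidableEq V] in
lemma exists_source {E : Finset (V × V)} {C : Finset V} (hC : IsCutset E C)
    {S : Finset V} (hS : Disjoint S C) (hne : S.Nonempty) :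
    ∃ X ∈ S, ∀ p ∈ S, (p, X) ∉ E := by
  let r : V → V → Prop := fun a b => (a, b) ∈ E ∧ a ∉ C ∧ b ∉ C
  have : IsTrans V (Relation.TransGen r) := ⟨fun _ _ _ => Relation.TransGen.trans⟩
  have : Std.Irrefl (Relation.TransGen r) := ⟨hC⟩
  obtain ⟨X, hXS, hmin⟩ := (Finite.wellFounded_of_trans_of_irrefl (Relation.TransGen r)).has_min
    (S : Set V) (Finset.coe_nonempty.2 hne)
  exact ⟨X, hXS, fun p hp hpX => hmin p hp
    (.single ⟨hpX, Finset.disjoint_left.1 hS hp, Finset.disjoint_left.1 hS hXS⟩)⟩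

/-- Summing out a source `X` of `S` first: its factor only reads nodes outside `S`, and its two
values add up to one. -/
theorem sum_extensions_prod_copyProb (B : GBN V) {C : Finset V} (hC : IsCutset B.edges C)
    {S : Finset V} (hS : Disjoint S C) (b0 : V → Bool) :
    ∑ b ∈ extensions S b0, ∏ X ∈ S, copyProb B X (b X) b = 1 := by
  induction S using Finset.strongInduction generalizing b0 with
  | H S ih =>
  rcases S.eq_empty_or_nonempty with rfl | hne
  · have : extensions ∅ b0 = {b0} := by
      ext b; simp [extensions, funext_iff]
    simp [this]
  obtain ⟨X, hXS, hsrc⟩ := exists_source hC hS hne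
  have hT : S.erase X ⊂ S := Finset.erase_ssubset hXS
  rw [← Finset.insert_erase hXS, sum_extensions_insert (Finset.notMem_erase X S),
    ← sum_copyProb B X b0]
  refine Finset.sum_congr rfl fun v _ => ?_
  have hfactor : ∀ b ∈ extensions (S.erase X) (Function.update b0 X v),
      ∏ Y ∈ insert X (S.erase X), copyProb B Y (b Y) b =
        copyProb B X v b0 * ∏ Y ∈ S.erase X, copyProb B Y (b Y) b := by
    intro b hb
    simp only [extensions, Finset.mem_filter, Finset.mem_univ, true_and] at hb
    rw [Finset.prod_insert (Finset.notMem_erase X S)]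
    congr 1
    have hbX : b X = v := by simpa using hb X (Finset.notMem_erase X S)
    rw [hbX]
    refine copyProb_congr B X v fun p hp => ?_
    have hpS : p ∉ S := fun h => hsrc p h (mem_Pre.1 hp)
    have hpX : p ≠ X := fun h => hpS (h ▸ hXS)
    rw [hb p fun h => hpS (Finset.mem_of_mem_erase h), Function.update_of_ne hpX]
  rw [Finset.sum_congr rfl hfactor, ← Finset.mul_sum,
    ih _ hT (Finset.disjoint_of_subset_left hT.subset hS), mul_one]

lemma sum_marginal (μ : (V → Bool) → ℝ) (U : Finset V) :
    ∑ d, marginal μ U d = ∑ a, μ a := by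
  simp only [marginal, probIf]
  rw [Finset.sum_comm]
  refine Finset.sum_congr rfl fun a _ => ?_
  have hagree : ∀ d : Asg U, Agrees a U d ↔ U.restrict a = d := fun d =>
    ⟨fun h => funext h, fun h x => congrFun h x⟩
  simp only [hagree, Finset.sum_ite_eq, Finset.mem_univ, if_true]

lemma sum_Next (B : GBN V) (C : Finset V) (γ : Asg C → ℝ) :
    ∑ a, Next B C γ a = ∑ b, ∑ c, distDissect B C γ b c := by
  simp only [Next]
  rw [Finset.sum_comm]
  refine Finset.sum_congr rfl fun b _ => ?_
  rw [← Finset.sum_filter, ← sum_extensions_restrict C b]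
  refine Finset.sum_congr ?_ fun _ _ => rfl
  ext a
  simp [extensions, eq_comm]

lemma sum_distDissect (B : GBN V) (C : Finset V) (γ : Asg C → ℝ) (b : V → Bool) :
    ∑ c, distDissect B C γ b c = B.ι ((InitSet B.edges).restrict b) * γ (C.restrict b) *
      ∏ X ∈ (Finset.univ \ InitSet B.edges) \ C, copyProb B X (b X) b := by
  simp only [distDissect, ← Finset.mul_sum, ← Finset.univ_eq_attach]
  rw [← Fintype.prod_sum fun (Y : {x // x ∈ C}) v => copyProb B Y v b]
  simp only [sum_copyProb, Finset.prod_const_one, mul_one]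
  rfl

lemma sum_prod_copyProb_le_one (B : GBN V) {C : Finset V} (hC : IsCutset B.edges C)
    (a : Asg (InitSet B.edges)) (d : Asg C) :
    ∑ b ∈ Finset.univ.filter (fun b : V → Bool =>
      (InitSet B.edges).restrict b = a ∧ C.restrict b = d),
      ∏ X ∈ (Finset.univ \ InitSet B.edges) \ C, copyProb B X (b X) b ≤ 1 := by
  set s := Finset.univ.filter (fun b : V → Bool =>
      (InitSet B.edges).restrict b = a ∧ C.restrict b = d)
  rcases s.eq_empty_or_nonempty with hs | ⟨b0, hb0⟩
  · simp [hs]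
  have : s = extensions ((Finset.univ \ InitSet B.edges) \ C) b0 := by
    simp only [s, Finset.mem_filter, Finset.mem_univ, true_and, funext_iff, Finset.restrict,
      Subtype.forall] at hb0
    ext b
    simp only [s, extensions, Finset.mem_filter, Finset.mem_univ, true_and, funext_iff,
      Finset.restrict, Finset.mem_sdiff, not_and, not_not, Subtype.forall]
    constructor
    · intro h x hx
      by_cases hxI : x ∈ InitSet B.edges
      · rw [h.1 x hxI, hb0.1 x hxI]
      · rw [h.2 x (hx hxI), hb0.2 x (hx hxI)]
    · intro h
      exact ⟨fun x hx => (h x fun h' => absurd hx h').trans (hb0.1 x hx),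
        fun x hx => (h x fun _ => hx).trans (hb0.2 x hx)⟩
  rw [this]
  exact (sum_extensions_prod_copyProb B hC Finset.sdiff_disjoint b0).le

lemma sum_cutsetP_le_one (B : GBN V) {C : Finset V} (hC : IsCutset B.edges C) (d : Asg C) :
    ∑ c, cutsetP B C d c ≤ 1 := by
  calc ∑ c, cutsetP B C d c
      = ∑ b, B.ι ((InitSet B.edges).restrict b) * DiracD d (C.restrict b) *
          ∏ X ∈ (Finset.univ \ InitSet B.edges) \ C, copyProb B X (b X) b := by
        simp only [cutsetP, sum_marginal, sum_Next, sum_distDissect]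
    _ = ∑ a, ∑ b ∈ Finset.univ.filter (fun b : V → Bool => (InitSet B.edges).restrict b = a),
          B.ι ((InitSet B.edges).restrict b) * DiracD d (C.restrict b) *
          ∏ X ∈ (Finset.univ \ InitSet B.edges) \ C, copyProb B X (b X) b :=
        (Finset.sum_fiberwise _ _ _).symm
    _ ≤ ∑ a, B.ι a := Finset.sum_le_sum fun a _ => ?_
    _ = 1 := B.ι_dist.2
  rw [Finset.sum_congr rfl fun b hb => by rw [(Finset.mem_filter.1 hb).2]]
  simp only [mul_assoc, ← Finset.mul_sum]
  refine mul_le_of_le_one_right (B.ι_dist.1 a) ?_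
  simp only [DiracD, ite_mul, one_mul, zero_mul, ← Finset.sum_filter, Finset.filter_filter]
  exact sum_prod_copyProb_le_one B hC a d

/-- For a GBN `B` with cutset `C`, a cutset distribution `γ`, and
the cutset Markov chain with transition matrix `P = cutsetP B C`, the following
are equivalent: (a) `γ = γ·P`; (b) `γ` is the Cesàro limit of the transient
distributions from some initial cutset distribution `γ0`; (c) `γ` lies in the
convex hull of the long-run frequency distributions of the bottom SCCs of the
chain (each padded with zeros outside its BSCC); (d) `γ = Next(B,C,γ)|_C`. -/
theorem stmt3 {V : Type} [Fintype V] [DecidableEq V]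
    (B : GBN V) (C : Finset V) (hC : IsCutset B.edges C)
    (γ : Asg C → ℝ) (hγ : IsDist γ) :
    ((γ = vecMul γ (cutsetP B C)) ↔
      (∃ γ0 : Asg C → ℝ, IsDist γ0 ∧
        Tendsto (cesaro (matIter (cutsetP B C) γ0)) atTop (nhds γ))) ∧
    ((γ = vecMul γ (cutsetP B C)) ↔
      γ ∈ convexHull ℝ { ν : Asg C → ℝ | ∃ D : Set (Asg C), ∃ x ∈ D,
        IsBSCC (cutsetP B C) D ∧
        Tendsto (cesaro (matIter (cutsetP B C) (DiracD x))) atTop (nhds ν) }) ∧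
    ((γ = vecMul γ (cutsetP B C)) ↔ γ = marginal (Next B C γ) C) := by
  have hP0 := cutsetP_nonneg B C
  have hP1 := sum_cutsetP_le_one B hC
  exact ⟨stationary_iff_exists_tendsto_cesaro hP0 hP1 hγ,
    stationary_iff_mem_convexHull_bsccLongRunFreqs hP0 hP1 hγ,
    by rw [marginal_Next_eq_vecMul]⟩

end GBNPaper
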